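/- Let 𝔤 be a finite-dimensional real Lie algebra equipped with an Ad-invariant inner product. Let A, F : ℝ³ → (Fin 3 → 𝔤) be smooth and λ : ℝ³ → 𝔤 be smooth with compact support, and set B := curl A + (1/2) • ⋆[A,A]. Assume: (i) for every smooth compactly supported v : ℝ³ → (Fin 3 → 𝔤), ∫_{ℝ³} ⟨F, v⟩ + ∫_{ℝ³} ⟨grad λ + [A,λ], v⟩ = ∫_{ℝ³} ⟨B, curl v + ⋆[A,v]⟩ (where ⟨u,w⟩ denotes Σ_μ ⟨u(μ), w(μ)⟩); (ii) ∫_{ℝ³} ⟨F, grad λ + [A,λ]⟩ = 0. Then grad λ + [A,λ] = 0 identically on ℝ³. -/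

import Mathlib

open scoped BigOperators

/-- The Levi-Civita symbol on three indices (totally antisymmetric, `ε 0 1 2 = 1`). -/
noncomputable def levicivita (i j k : Fin 3) : ℝ :=
  (((j : ℕ) : ℝ) - ((i : ℕ) : ℝ)) * (((k : ℕ) : ℝ) - ((j : ℕ) : ℝ)) *
    (((k : ℕ) : ℝ) - ((i : ℕ) : ℝ)) / 2

/-- The partial derivative `∂_μ f` on `ℝ³`. -/
noncomputable def pderiv3 {E : Type*} [NormedAddCommGroup E] [NormedSpace ℝ E]
    (μ : Fin 3) (f : EuclideanSpace ℝ (Fin 3) → E) (x : EuclideanSpace ℝ (Fin 3)) : E :=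
  fderiv ℝ f x (EuclideanSpace.single μ 1)

/-- The gradient of a `𝔤`-valued function on `ℝ³`. -/
noncomputable def grad3 {𝔤 : Type*} [NormedAddCommGroup 𝔤] [NormedSpace ℝ 𝔤]
    (q : EuclideanSpace ℝ (Fin 3) → 𝔤) (x : EuclideanSpace ℝ (Fin 3)) : Fin 3 → 𝔤 :=
  fun μ => pderiv3 μ q x

/-- The curl of a `𝔤`-valued vector field on `ℝ³`:
`(curl A)(α) = Σ_{μ,ν} ε(α,μ,ν) • ∂_μ A(ν)`. -/
noncomputable def curl3 {𝔤 : Type*} [NormedAddCommGroup 𝔤] [NormedSpace ℝ 𝔤]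
    (A : EuclideanSpace ℝ (Fin 3) → Fin 3 → 𝔤) (x : EuclideanSpace ℝ (Fin 3)) :
    Fin 3 → 𝔤 :=
  fun α => ∑ μ : Fin 3, ∑ ν : Fin 3, levicivita α μ ν • pderiv3 μ (fun y => A y ν) x

/-- The divergence of a `𝔤`-valued vector field on `ℝ³`: `div A = Σ_μ ∂_μ A(μ)`. -/
noncomputable def div3 {𝔤 : Type*} [NormedAddCommGroup 𝔤] [NormedSpace ℝ 𝔤]
    (A : EuclideanSpace ℝ (Fin 3) → Fin 3 → 𝔤) (x : EuclideanSpace ℝ (Fin 3)) : 𝔤 :=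
  ∑ μ : Fin 3, pderiv3 μ (fun y => A y μ) x

/-- The cross-bracket `⋆[v,w](α) = Σ_{μ,ν} ε(α,μ,ν) • ⁅v(μ), w(ν)⁆`, where the Lie
bracket of `𝔤` is the continuous bilinear map `br`. -/
noncomputable def crossBr {𝔤 : Type*} [NormedAddCommGroup 𝔤] [NormedSpace ℝ 𝔤]
    (br : 𝔤 →L[ℝ] 𝔤 →L[ℝ] 𝔤) (v w : Fin 3 → 𝔤) : Fin 3 → 𝔤 :=
  fun α => ∑ μ : Fin 3, ∑ ν : Fin 3, levicivita α μ ν • br (v μ) (w ν)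

/-- The dot-bracket `⋆[v,⋆w] = Σ_α ⁅v(α), w(α)⁆`, where the Lie bracket of `𝔤` is the
continuous bilinear map `br`. -/
noncomputable def dotBr {𝔤 : Type*} [NormedAddCommGroup 𝔤] [NormedSpace ℝ 𝔤]
    (br : 𝔤 →L[ℝ] 𝔤 →L[ℝ] 𝔤) (v w : Fin 3 → 𝔤) : 𝔤 :=
  ∑ α : Fin 3, br (v α) (w α)

/-!
`G := grad λ + [A,λ]` is the covariant derivative of `λ`. Since `B` is the curvature of `A`,
symmetry of second derivatives and the Jacobi identity give `curl G + ⋆[A,G] = [B,λ]`, which is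
pointwise orthogonal to `B` by Ad-invariance and `[B,B] = 0`. Testing the weak equation with
`v = G` therefore kills its right-hand side, and the orthogonality relation leaves
`∫ ⟨G,G⟩ = 0`; as `⟨G,G⟩` is continuous and nonnegative, `G = 0`.
-/

open scoped ContDiff

local notation "ℝ³" => EuclideanSpace ℝ (Fin 3)

theorem levicivita_swap (i j k : Fin 3) : levicivita i k j = -levicivita i j k := by
  unfold levicivita; ring

section LeviCivita

variable {M : Type*} [AddCommGroup M] [Module ℝ M]

theorem sum_levicivita_smul_swap (α : Fin 3) (S : Fin 3 → Fin 3 → M) :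
    ∑ μ : Fin 3, ∑ ν : Fin 3, levicivita α μ ν • S ν μ
      = -∑ μ : Fin 3, ∑ ν : Fin 3, levicivita α μ ν • S μ ν := by
  rw [Finset.sum_comm, ← Finset.sum_neg_distrib]
  refine Finset.sum_congr rfl fun μ _ => ?_
  rw [← Finset.sum_neg_distrib]
  refine Finset.sum_congr rfl fun ν _ => ?_
  rw [levicivita_swap, neg_smul]

theorem two_smul_sum_levicivita_smul (α : Fin 3) (S : Fin 3 → Fin 3 → M) :
    (2 : ℝ) • ∑ μ : Fin 3, ∑ ν : Fin 3, levicivita α μ ν • S μ ν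
      = ∑ μ : Fin 3, ∑ ν : Fin 3, levicivita α μ ν • (S μ ν - S ν μ) := by
  simp only [smul_sub, Finset.sum_sub_distrib]
  rw [sum_levicivita_smul_swap α S, sub_neg_eq_add, two_smul]

theorem sum_levicivita_smul_of_symm (α : Fin 3) {S : Fin 3 → Fin 3 → M}
    (hS : ∀ μ ν, S μ ν = S ν μ) :
    ∑ μ : Fin 3, ∑ ν : Fin 3, levicivita α μ ν • S μ ν = 0 := by
  have h := two_smul_sum_levicivita_smul α S
  simp only [← hS, sub_self, smul_zero, Finset.sum_const_zero] at h
  exact (smul_eq_zero.mp h).resolve_left two_ne_zero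

end LeviCivita

section Bracket

variable {𝔤 : Type*} [NormedAddCommGroup 𝔤] [NormedSpace ℝ 𝔤] (br : 𝔤 →L[ℝ] 𝔤 →L[ℝ] 𝔤)

theorem br_swap (br_alt : ∀ a : 𝔤, br a a = 0) (a b : 𝔤) : br b a = -br a b := by
  have h := br_alt (a + b)
  simp only [map_add, add_apply, br_alt, zero_add, add_zero] at h
  exact eq_neg_of_add_eq_zero_left h

theorem br_br_sub_br_br (br_alt : ∀ a : 𝔤, br a a = 0)
    (br_jacobi : ∀ a b c : 𝔤, br a (br b c) + br b (br c a) + br c (br a b) = 0)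
    (a b c : 𝔤) : br a (br b c) - br b (br a c) = br (br a b) c := by
  have h := br_jacobi a b c
  rw [br_swap br br_alt a c, br_swap br br_alt (br a b) c, map_neg] at h
  rw [sub_eq_iff_eq_add, ← sub_eq_zero, ← h]
  abel

theorem crossBr_br_eq (br_alt : ∀ a : 𝔤, br a a = 0)
    (br_jacobi : ∀ a b c : 𝔤, br a (br b c) + br b (br c a) + br c (br a b) = 0)
    (a : Fin 3 → 𝔤) (c : 𝔤) (α : Fin 3) :
    crossBr br a (fun ν => br (a ν) c) α = br ((1 / 2 : ℝ) • crossBr br a a α) c := by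
  have h := two_smul_sum_levicivita_smul α fun μ ν => br (a μ) (br (a ν) c)
  simp only [br_br_sub_br_br br br_alt br_jacobi] at h
  rw [map_smul, smul_apply, crossBr, crossBr]
  simp only [map_sum, map_smul, sum_apply, smul_apply]
  rw [← h, smul_smul]
  norm_num

theorem crossBr_add_right (a b c : Fin 3 → 𝔤) :
    crossBr br a (b + c) = crossBr br a b + crossBr br a c := by
  funext α
  simp only [crossBr, Pi.add_apply, map_add, smul_add, Finset.sum_add_distrib]

end Bracket

section PartialDerivative

variable {E F G : Type*} [NormedAddCommGroup E] [NormedSpace ℝ E] [NormedAddCommGroup F]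
  [NormedSpace ℝ F] [NormedAddCommGroup G] [NormedSpace ℝ G]

theorem contDiff_pderiv3 {m n : WithTop ℕ∞} {f : ℝ³ → E} (hf : ContDiff ℝ n f) (hmn : m + 1 ≤ n)
    (μ : Fin 3) : ContDiff ℝ m (pderiv3 μ f) :=
  (hf.fderiv_right hmn).clm_apply contDiff_const

theorem pderiv3_add {f g : ℝ³ → E} {x : ℝ³} (hf : DifferentiableAt ℝ f x)
    (hg : DifferentiableAt ℝ g x) (μ : Fin 3) :
    pderiv3 μ (fun y => f y + g y) x = pderiv3 μ f x + pderiv3 μ g x := by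
  simp only [pderiv3, fderiv_fun_add hf hg, add_apply]

theorem pderiv3_bilinear (b : E →L[ℝ] F →L[ℝ] G) {f : ℝ³ → E} {g : ℝ³ → F} {x : ℝ³}
    (hf : DifferentiableAt ℝ f x) (hg : DifferentiableAt ℝ g x) (μ : Fin 3) :
    pderiv3 μ (fun y => b (f y) (g y)) x = b (pderiv3 μ f x) (g x) + b (f x) (pderiv3 μ g x) := by
  have hbf : HasFDerivAt (fun y => b (f y)) (b.comp (fderiv ℝ f x)) x :=
    b.hasFDerivAt.comp x hf.hasFDerivAt
  rw [pderiv3, (hbf.clm_apply hg.hasFDerivAt).fderiv]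
  simp only [pderiv3, add_apply, ContinuousLinearMap.comp_apply, ContinuousLinearMap.flip_apply]
  abel

theorem pderiv3_comm {f : ℝ³ → E} (hf : ContDiff ℝ 2 f) (μ ν : Fin 3) (x : ℝ³) :
    pderiv3 μ (pderiv3 ν f) x = pderiv3 ν (pderiv3 μ f) x := by
  have hf' : Differentiable ℝ (fderiv ℝ f) := (hf.fderiv_right le_rfl).differentiable one_ne_zero
  have hsecond : ∀ i j : Fin 3, pderiv3 i (pderiv3 j f) x
      = fderiv ℝ (fderiv ℝ f) x (EuclideanSpace.single i 1) (EuclideanSpace.single j 1) := by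
    intro i j
    unfold pderiv3
    rw [fderiv_clm_apply (hf' x) (differentiableAt_const _)]
    simp
  rw [hsecond, hsecond]
  exact (hf.contDiffAt.isSymmSndFDerivAt (by simp)) _ _

end PartialDerivative

section Curl

variable {E F G : Type*} [NormedAddCommGroup E] [NormedSpace ℝ E] [NormedAddCommGroup F]
  [NormedSpace ℝ F] [NormedAddCommGroup G] [NormedSpace ℝ G]

theorem curl3_grad3 {f : ℝ³ → E} (hf : ContDiff ℝ 2 f) (x : ℝ³) : curl3 (grad3 f) x = 0 :=
  funext fun α => sum_levicivita_smul_of_symm α fun μ ν => pderiv3_comm hf μ ν x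

theorem curl3_add {f g : ℝ³ → Fin 3 → E} {x : ℝ³} (hf : DifferentiableAt ℝ f x)
    (hg : DifferentiableAt ℝ g x) : curl3 (f + g) x = curl3 f x + curl3 g x := by
  funext α
  simp only [curl3, Pi.add_apply, pderiv3_add (differentiableAt_pi.1 hf _)
    (differentiableAt_pi.1 hg _), smul_add, Finset.sum_add_distrib]

theorem curl3_bilinear (b : E →L[ℝ] F →L[ℝ] G) {A : ℝ³ → Fin 3 → E} {f : ℝ³ → F} {x : ℝ³}
    (hA : DifferentiableAt ℝ A x) (hf : DifferentiableAt ℝ f x) (α : Fin 3) :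
    curl3 (fun y ν => b (A y ν) (f y)) x α
      = b (curl3 A x α) (f x)
        + ∑ μ : Fin 3, ∑ ν : Fin 3, levicivita α μ ν • b (A x ν) (pderiv3 μ f x) := by
  simp only [curl3, pderiv3_bilinear b (differentiableAt_pi.1 hA _) hf, smul_add,
    Finset.sum_add_distrib, map_sum, map_smul, sum_apply, smul_apply]

end Curl

section CovariantDerivative

variable {𝔤 : Type*} [NormedAddCommGroup 𝔤] [NormedSpace ℝ 𝔤] (br : 𝔤 →L[ℝ] 𝔤 →L[ℝ] 𝔤)
  {A : ℝ³ → Fin 3 → 𝔤} {lam : ℝ³ → 𝔤}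

noncomputable def covGrad3 (A : ℝ³ → Fin 3 → 𝔤) (lam : ℝ³ → 𝔤) (x : ℝ³) : Fin 3 → 𝔤 :=
  fun μ => grad3 lam x μ + br (A x μ) (lam x)

theorem contDiff_covGrad3 {m n : WithTop ℕ∞} (hA : ContDiff ℝ m A) (hlam : ContDiff ℝ n lam)
    (hmn : m + 1 ≤ n) : ContDiff ℝ m (covGrad3 br A lam) :=
  contDiff_pi.2 fun μ => (contDiff_pderiv3 hlam hmn μ).add
    ((br.contDiff.comp (contDiff_pi.1 hA μ)).clm_apply (hlam.of_le (le_self_add.trans hmn)))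

theorem HasCompactSupport.covGrad3 (hlam : HasCompactSupport lam) :
    HasCompactSupport (covGrad3 br A lam) := by
  refine HasCompactSupport.intro hlam fun x hx => funext fun μ => ?_
  simp [_root_.covGrad3, grad3, pderiv3, fderiv_of_notMem_tsupport ℝ hx,
    image_eq_zero_of_notMem_tsupport hx]

theorem curl3_covGrad3_add_crossBr (br_alt : ∀ a : 𝔤, br a a = 0)
    (br_jacobi : ∀ a b c : 𝔤, br a (br b c) + br b (br c a) + br c (br a b) = 0)
    (hA : Differentiable ℝ A) (hlam : ContDiff ℝ 2 lam) (x : ℝ³) (α : Fin 3) :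
    curl3 (covGrad3 br A lam) x α + crossBr br (A x) (covGrad3 br A lam x) α
      = br (curl3 A x α + (1 / 2 : ℝ) • crossBr br (A x) (A x) α) (lam x) := by
  have hlam' : Differentiable ℝ lam := hlam.differentiable two_ne_zero
  have hgrad : Differentiable ℝ (grad3 lam) := differentiable_pi.2 fun μ =>
    (contDiff_pderiv3 hlam (m := 1) (by norm_num) μ).differentiable one_ne_zero
  have hbr : Differentiable ℝ fun y ν => br (A y ν) (lam y) := differentiable_pi.2 fun ν =>
    (br.differentiable.comp (differentiable_pi.1 hA ν)).clm_apply hlam'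
  have hsplit : covGrad3 br A lam = grad3 lam + fun y ν => br (A y ν) (lam y) := rfl
  rw [hsplit, curl3_add (hgrad x) (hbr x), curl3_grad3 hlam, zero_add, Pi.add_apply,
    crossBr_add_right, Pi.add_apply, curl3_bilinear br (hA x) (hlam' x),
    crossBr_br_eq br br_alt br_jacobi,
    sum_levicivita_smul_swap α fun μ ν => br (A x μ) (pderiv3 ν lam x), map_add, add_apply]
  unfold crossBr grad3
  abel

end CovariantDerivative

theorem LinearMap.continuous_uncurry_of_finiteDimensional {E F : Type*} [NormedAddCommGroup E]
    [NormedSpace ℝ E] [FiniteDimensional ℝ E] [NormedAddCommGroup F] [NormedSpace ℝ F]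
    [FiniteDimensional ℝ F] (b : E →ₗ[ℝ] F →ₗ[ℝ] ℝ) : Continuous fun p : E × F => b p.1 p.2 :=
  (LinearMap.toContinuousLinearMap
    (LinearMap.toContinuousLinearMap.toLinearMap ∘ₗ b)).continuous₂

open MeasureTheory

theorem eq_zero_of_integral_sum_self_eq_zero {X ι 𝔤 : Type*} [TopologicalSpace X]
    [MeasurableSpace X] [OpensMeasurableSpace X] {ν : Measure X} [ν.IsOpenPosMeasure]
    [IsFiniteMeasureOnCompacts ν] [Fintype ι] [NormedAddCommGroup 𝔤] [NormedSpace ℝ 𝔤]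
    [FiniteDimensional ℝ 𝔤] (ip : 𝔤 →ₗ[ℝ] 𝔤 →ₗ[ℝ] ℝ) (ip_pos : ∀ a : 𝔤, a ≠ 0 → 0 < ip a a)
    {G : X → ι → 𝔤} (hG : Continuous G) (hG_supp : HasCompactSupport G)
    (h : ∫ x, ∑ i, ip (G x i) (G x i) ∂ν = 0) : G = 0 := by
  have ip_self_nonneg (a : 𝔤) : 0 ≤ ip a a := by
    rcases eq_or_ne a 0 with rfl | ha
    · simp
    · exact (ip_pos a ha).le
  set f : X → ℝ := fun x => ∑ i, ip (G x i) (G x i)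
  have hf : Continuous f := continuous_finsetSum _ fun i _ =>
    ip.continuous_uncurry_of_finiteDimensional.comp
      (((continuous_apply i).comp hG).prodMk ((continuous_apply i).comp hG))
  have hf_supp : HasCompactSupport f :=
    hG_supp.comp_left (g := fun v : ι → 𝔤 => ∑ i, ip (v i) (v i)) (by simp)
  have hf_nonneg : 0 ≤ f := fun x => Finset.sum_nonneg fun i _ => ip_self_nonneg _
  have hf_zero : f = 0 := (hf.ae_eq_iff_eq ν continuous_zero).1
    ((integral_eq_zero_iff_of_nonneg hf_nonneg (hf.integrable_of_hasCompactSupport hf_supp)).1 h)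
  funext x i
  by_contra hne
  have hle : ip (G x i) (G x i) ≤ f x :=
    Finset.single_le_sum (fun j _ => ip_self_nonneg (G x j)) (Finset.mem_univ i)
  rw [hf_zero] at hle
  exact (ip_pos _ hne).not_ge hle

theorem lagrange_multiplier_vanishing_general {𝔤 : Type*} [NormedAddCommGroup 𝔤]
    [NormedSpace ℝ 𝔤] [FiniteDimensional ℝ 𝔤]
    (br : 𝔤 →L[ℝ] 𝔤 →L[ℝ] 𝔤)
    (br_alt : ∀ a : 𝔤, br a a = 0)
    (br_jacobi : ∀ a b c : 𝔤, br a (br b c) + br b (br c a) + br c (br a b) = 0)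
    (ip : 𝔤 →ₗ[ℝ] 𝔤 →ₗ[ℝ] ℝ)
    (ip_pos : ∀ a : 𝔤, a ≠ 0 → 0 < ip a a)
    (ip_ad : ∀ a b c : 𝔤, ip (br a b) c = ip a (br b c))
    (A F : EuclideanSpace ℝ (Fin 3) → Fin 3 → 𝔤)
    (lam : EuclideanSpace ℝ (Fin 3) → 𝔤)
    (hA : ContDiff ℝ (⊤ : ℕ∞) A)
    (hlam : ContDiff ℝ (⊤ : ℕ∞) lam) (hlam_supp : HasCompactSupport lam)
    (B : EuclideanSpace ℝ (Fin 3) → Fin 3 → 𝔤)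
    (hB : B = fun y α => curl3 A y α + (1/2 : ℝ) • crossBr br (A y) (A y) α)
    (weak_eq : ∀ v : EuclideanSpace ℝ (Fin 3) → Fin 3 → 𝔤,
      ContDiff ℝ (⊤ : ℕ∞) v → HasCompactSupport v →
      (∫ x : EuclideanSpace ℝ (Fin 3), ∑ μ : Fin 3, ip (F x μ) (v x μ))
        + (∫ x : EuclideanSpace ℝ (Fin 3),
            ∑ μ : Fin 3, ip (grad3 lam x μ + br (A x μ) (lam x)) (v x μ))
        = ∫ x : EuclideanSpace ℝ (Fin 3),
            ∑ μ : Fin 3, ip (B x μ) (curl3 v x μ + crossBr br (A x) (v x) μ))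
    (orth_eq : (∫ x : EuclideanSpace ℝ (Fin 3),
        ∑ μ : Fin 3, ip (F x μ) (grad3 lam x μ + br (A x μ) (lam x))) = 0) :
    ∀ (x : EuclideanSpace ℝ (Fin 3)) (μ : Fin 3),
      grad3 lam x μ + br (A x μ) (lam x) = 0 := by
  set G := covGrad3 br A lam
  have hG : ContDiff ℝ ∞ G := contDiff_covGrad3 br hA hlam (by simp)
  have hG_supp : HasCompactSupport G := hlam_supp.covGrad3 br
  have hcurv_orth (x : ℝ³) : ∑ μ, ip (B x μ) (curl3 G x μ + crossBr br (A x) (G x) μ) = 0 := by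
    refine Finset.sum_eq_zero fun μ _ => ?_
    simp only [hB]
    rw [curl3_covGrad3_add_crossBr br br_alt br_jacobi (hA.differentiable (by norm_num))
      (hlam.of_le (WithTop.coe_le_coe.2 le_top)), ← ip_ad, br_alt, map_zero,
      LinearMap.zero_apply]
  have hGG : ∫ x, ∑ μ, ip (G x μ) (G x μ) = 0 := by
    have h : (∫ x, ∑ μ, ip (F x μ) (G x μ)) + ∫ x, ∑ μ, ip (G x μ) (G x μ)
        = ∫ x, ∑ μ, ip (B x μ) (curl3 G x μ + crossBr br (A x) (G x) μ) :=
      weak_eq G hG hG_supp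
    have hF_orth : ∫ x, ∑ μ, ip (F x μ) (G x μ) = 0 := orth_eq
    simpa only [hF_orth, zero_add, hcurv_orth, integral_zero] using h
  intro x μ
  exact congrFun (congrFun (eq_zero_of_integral_sum_self_eq_zero ip ip_pos hG.continuous
    hG_supp hGG) x) μ

/-- if `(A, F, λ)` satisfy the Lagrange-multiplier weak relation (i) for
all smooth compactly supported test fields `v`, and the orthogonality relation (ii),
then `grad λ + [A,λ] = 0` identically on `ℝ³`. -/
theorem lagrange_multiplier_vanishing {𝔤 : Type*} [NormedAddCommGroup 𝔤]
    [NormedSpace ℝ 𝔤] [FiniteDimensional ℝ 𝔤]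
    (br : 𝔤 →L[ℝ] 𝔤 →L[ℝ] 𝔤)
    (br_alt : ∀ a : 𝔤, br a a = 0)
    (br_jacobi : ∀ a b c : 𝔤, br a (br b c) + br b (br c a) + br c (br a b) = 0)
    (ip : 𝔤 →ₗ[ℝ] 𝔤 →ₗ[ℝ] ℝ)
    (ip_symm : ∀ a b : 𝔤, ip a b = ip b a)
    (ip_pos : ∀ a : 𝔤, a ≠ 0 → 0 < ip a a)
    (ip_ad : ∀ a b c : 𝔤, ip (br a b) c = ip a (br b c))
    (A F : EuclideanSpace ℝ (Fin 3) → Fin 3 → 𝔤)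
    (lam : EuclideanSpace ℝ (Fin 3) → 𝔤)
    (hA : ContDiff ℝ (⊤ : ℕ∞) A) (hF : ContDiff ℝ (⊤ : ℕ∞) F)
    (hlam : ContDiff ℝ (⊤ : ℕ∞) lam) (hlam_supp : HasCompactSupport lam)
    (B : EuclideanSpace ℝ (Fin 3) → Fin 3 → 𝔤)
    (hB : B = fun y α => curl3 A y α + (1/2 : ℝ) • crossBr br (A y) (A y) α)
    (weak_eq : ∀ v : EuclideanSpace ℝ (Fin 3) → Fin 3 → 𝔤,
      ContDiff ℝ (⊤ : ℕ∞) v → HasCompactSupport v →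
      (∫ x : EuclideanSpace ℝ (Fin 3), ∑ μ : Fin 3, ip (F x μ) (v x μ))
        + (∫ x : EuclideanSpace ℝ (Fin 3),
            ∑ μ : Fin 3, ip (grad3 lam x μ + br (A x μ) (lam x)) (v x μ))
        = ∫ x : EuclideanSpace ℝ (Fin 3),
            ∑ μ : Fin 3, ip (B x μ) (curl3 v x μ + crossBr br (A x) (v x) μ))
    (orth_eq : (∫ x : EuclideanSpace ℝ (Fin 3),
        ∑ μ : Fin 3, ip (F x μ) (grad3 lam x μ + br (A x μ) (lam x))) = 0) :
    ∀ (x : EuclideanSpace ℝ (Fin 3)) (μ : Fin 3),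
      grad3 lam x μ + br (A x μ) (lam x) = 0 :=
  lagrange_multiplier_vanishing_general br br_alt br_jacobi ip ip_pos ip_ad A F lam hA hlam
    hlam_supp B hB weak_eq orth_eq
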